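/- Let D and D' be the induced multidegrees on the subdivided graph Γ̃ of two admissible multidegrees on (Γ, 𝐧). If D' is obtained from D by a finite sequence of chip-firing moves and inverse chip-firing moves performed only at vertices of V(Γ̃)∖V(Γ) (i.e., only at new vertices inserted by the subdivision), then D = D'. -/

import Mathlib

/-!
Let `x` count the net firings at each new vertex. On the chain over an edge `e`, with `x`
extended by `0` to its two old endpoints, the relation `D' - D = Δx` at the new vertex in
position `p` reads `x(p-1) + x(p+1) - 2x(p) = [p = b] - [p = a]`, where `a, b < 𝐧(e)` are the
values of `μ(e)` and `μ'(e)`. Pairing with the harmonic weight `p` telescopes to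
`𝐧(e) · x(𝐧(e) - 1) = a - b`, so `a = b` by integrality; then `x` is linear on the chain and
vanishes at both ends, hence `x = 0`, and no firing changed anything.
-/

open scoped Classical

namespace LLS

variable {V E : Type*}

/-- `σ(e,v)`: `1` if `v` is the tail of `e`, `-1` if `v` is the head of `e`, `0` otherwise. -/
noncomputable def sigma (tail head : E → V) (e : E) (v : V) : ℤ :=
  if tail e = v then 1 else if head e = v then -1 else 0

/-- The endpoint of `e` other than `v` (for `e` adjacent to `v`). -/
noncomputable def otherEnd (tail head : E → V) (e : E) (v : V) : V :=
  if tail e = v then head e else tail e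

/-- The multigraph is loopless. -/
def Loopless (tail head : E → V) : Prop := ∀ e, tail e ≠ head e

/-- The multigraph is connected. -/
def MGConnected (tail head : E → V) : Prop :=
  ∀ u v : V, Relation.ReflTransGen
    (fun a b => ∃ e, (tail e = a ∧ head e = b) ∨ (tail e = b ∧ head e = a)) u v

/-- An admissible multidegree on `(Γ, 𝐧)`: a function `V(Γ) → ℤ` together with an
element `μ(e) ∈ ℤ/𝐧(e)ℤ` for each edge `e`. -/
structure AdmMD (V E : Type*) (n : E → ℕ) where
  wV : V → ℤ
  mu : ∀ e : E, ZMod (n e)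

section FinGraph

variable [Fintype V] [Fintype E] [DecidableEq V] [DecidableEq E]

/-- The twist of an admissible multidegree at a vertex `v`. -/
noncomputable def twist (tail head : E → V) (n : E → ℕ) (w : AdmMD V E n) (v : V) :
    AdmMD V E n where
  wV u := w.wV u
    - (if u = v then ((Finset.univ.filter fun e : E =>
        sigma tail head e v ≠ 0 ∧ w.mu e = 0).card : ℤ) else 0)
    + ((Finset.univ.filter fun e : E => sigma tail head e v ≠ 0 ∧
        w.mu e + (sigma tail head e v : ZMod (n e)) = 0 ∧
        otherEnd tail head e v = u).card : ℤ)
  mu e := w.mu e + (sigma tail head e v : ZMod (n e))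

/-- The negative twist of an admissible multidegree at a vertex `v`
(the inverse of `twist`). -/
noncomputable def negTwist (tail head : E → V) (n : E → ℕ) (w : AdmMD V E n) (v : V) :
    AdmMD V E n where
  wV u := w.wV u
    + (if u = v then ((Finset.univ.filter fun e : E => sigma tail head e v ≠ 0 ∧
        w.mu e - (sigma tail head e v : ZMod (n e)) = 0).card : ℤ) else 0)
    - ((Finset.univ.filter fun e : E => sigma tail head e v ≠ 0 ∧
        w.mu e = 0 ∧ otherEnd tail head e v = u).card : ℤ)
  mu e := w.mu e - (sigma tail head e v : ZMod (n e))

/-- An admissible multidegree is concentrated at `v` if there is an ordering of all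
vertices starting with `v` such that composing the negative twists at all previous
vertices makes the multidegree negative at each subsequent vertex. -/
def Concentrated (tail head : E → V) (n : E → ℕ) (w : AdmMD V E n) (v : V) : Prop :=
  ∃ l : List V, l.Nodup ∧ (∀ x : V, x ∈ l) ∧ l.head? = some v ∧
    ∀ (i : ℕ) (h : i < l.length), 0 < i →
      (((l.take i).foldl (negTwist tail head n) w).wV (l.get ⟨i, h⟩)) < 0

/-- `w` is obtained from `w₀` by a finite sequence of twists, i.e. `w ∈ V(G(w₀))`. -/
def TwistSeq (tail head : E → V) (n : E → ℕ) (w₀ w : AdmMD V E n) : Prop :=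
  ∃ l : List V, l.foldl (twist tail head n) w₀ = w

/-- `l` records the successive twist vertices of a minimal path from `w` to `w'`
in `G(w₀)`. -/
def IsMinPath (tail head : E → V) (n : E → ℕ) (w w' : AdmMD V E n) (l : List V) : Prop :=
  l.foldl (twist tail head n) w = w' ∧
    ∀ l' : List V, l'.foldl (twist tail head n) w = w' → l.length ≤ l'.length

/-- The membership condition describing the subgraph `Ḡ(w₀)` of `G(w₀)`:
no minimal path from `w` to `w_v` involves twisting at `v`. -/
def InBarG (tail head : E → V) (n : E → ℕ) (w₀ : AdmMD V E n) (wv : V → AdmMD V E n)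
    (w : AdmMD V E n) : Prop :=
  TwistSeq tail head n w₀ w ∧
    ∀ (v : V) (l : List V), IsMinPath tail head n w (wv v) l → v ∉ l

/-- Edges joining `v` and `u`. -/
noncomputable def edgesBetween (tail head : E → V) (v u : V) : Finset E :=
  Finset.univ.filter fun e => (tail e = v ∧ head e = u) ∨ (head e = v ∧ tail e = u)

/-- Edges adjacent to `v`. -/
noncomputable def edgesAdj (tail head : E → V) (v : V) : Finset E :=
  Finset.univ.filter fun e => tail e = v ∨ head e = v

/-- The change of a divisor effected by a single chip-firing move at `v`. -/
noncomputable def fireDelta (tail head : E → V) (v : V) : V → ℤ := fun u =>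
  ((edgesBetween tail head v u).card : ℤ)
    - (if u = v then ((edgesAdj tail head v).card : ℤ) else 0)

/-- A chip-firing move (twist) at `v`. -/
noncomputable def chipFire (tail head : E → V) (D : V → ℤ) (v : V) : V → ℤ :=
  fun u => D u + fireDelta tail head v u

/-- The inverse of a chip-firing move at `v`. -/
noncomputable def negChipFire (tail head : E → V) (D : V → ℤ) (v : V) : V → ℤ :=
  fun u => D u - fireDelta tail head v u

/-- A divisor (multidegree) on a graph is concentrated at `v`. -/
def ConcentratedDiv (tail head : E → V) (D : V → ℤ) (v : V) : Prop :=
  ∃ l : List V, l.Nodup ∧ (∀ x : V, x ∈ l) ∧ l.head? = some v ∧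
    ∀ (i : ℕ) (h : i < l.length), 0 < i →
      (((l.take i).foldl (negChipFire tail head) D) (l.get ⟨i, h⟩)) < 0

/-- A divisor on a graph is `v₀`-reduced. -/
def VReduced (tail head : E → V) (D : V → ℤ) (v₀ : V) : Prop :=
  (∀ u, u ≠ v₀ → 0 ≤ D u) ∧
    ∀ S : Finset V, S.Nonempty → v₀ ∉ S →
      ∃ v ∈ S, D v < ((Finset.univ.filter fun e : E =>
        (tail e = v ∧ head e ∉ S) ∨ (head e = v ∧ tail e ∉ S)).card : ℤ)

/-- The function `D_{w,v}` on edges of `Γ` determined by a path `l` from `w` to `w_v`. -/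
noncomputable def DFun (tail head : E → V) (n : E → ℕ) (w : AdmMD V E n) (l : List V)
    (v : V) (et : E) : ℤ :=
  (((Finset.univ : Finset (Fin l.length)).filter fun j =>
      l.get j = otherEnd tail head et v ∧
        ((l.take (j.val + 1)).foldl (twist tail head n) w).mu et = 0).card : ℤ)
  - (((Finset.univ : Finset (Fin l.length)).filter fun j =>
      l.get j = v ∧ ((l.take j.val).foldl (twist tail head n) w).mu et = 0).card : ℤ)

end FinGraph

/-- The tail map of the subdivided graph `Γ̃`: the edge `e` of `Γ` is subdivided into
`𝐧(e)` edges `(e, j)`, `j = 0, …, 𝐧(e) - 1`, numbered from the tail of `e`; the new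
vertices over `e` are `(e, i)`, `i = 0, …, 𝐧(e) - 2`, with `(e, i)` being the
`(i+1)`-st new vertex from the tail of `e`. -/
def tailT (tail head : E → V) (n : E → ℕ) :
    (Σ e : E, Fin (n e)) → V ⊕ Σ e : E, Fin (n e - 1) := fun p =>
  if h : p.2.val = 0 then Sum.inl (tail p.1)
  else Sum.inr ⟨p.1, ⟨p.2.val - 1, by have := p.2.isLt; omega⟩⟩

/-- The head map of the subdivided graph `Γ̃`. -/
def headT (tail head : E → V) (n : E → ℕ) :
    (Σ e : E, Fin (n e)) → V ⊕ Σ e : E, Fin (n e - 1) := fun p =>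
  if h : p.2.val = n p.1 - 1 then Sum.inl (head p.1)
  else Sum.inr ⟨p.1, ⟨p.2.val, by have := p.2.isLt; omega⟩⟩

/-- The multidegree on the subdivided graph `Γ̃` induced by an admissible multidegree:
it agrees with `w` on old vertices, is `1` on the `μ(e)`-th new vertex over `e`
when `μ(e) ≠ 0`, and is `0` on all other new vertices. -/
noncomputable def inducedMD (n : E → ℕ) (w : AdmMD V E n) :
    (V ⊕ Σ e : E, Fin (n e - 1)) → ℤ
  | Sum.inl v => w.wV v
  | Sum.inr ⟨e, i⟩ => if (w.mu e).val = i.val + 1 then 1 else 0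

/-- The simple graph `Γ̄` associated to the multigraph `Γ`: same vertices, one edge
between each pair of adjacent vertices. -/
def barGraph (tail head : E → V) : SimpleGraph V where
  Adj u v := u ≠ v ∧ ∃ e, (tail e = u ∧ head e = v) ∨ (tail e = v ∧ head e = u)
  symm := by
    constructor
    intro u v h
    exact ⟨h.1.symm, h.2.imp fun e he => he.symm⟩
  loopless := by
    constructor
    intro u h
    exact h.1 rfl

lemma sum_range_mul_secondDiff (y : ℕ → ℤ) (m : ℕ) :
    ∑ p ∈ Finset.range m, ((p : ℤ) + 1) * (y p + y (p + 2) - 2 * y (p + 1))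
      = m * y (m + 1) - (m + 1) * y m + y 0 := by
  induction m with
  | zero => simp
  | succ m ih => rw [Finset.sum_range_succ, ih]; push_cast; ring

lemma sum_range_mul_ite_eq {b m : ℕ} (hb : b ≤ m) :
    ∑ p ∈ Finset.range m, ((p : ℤ) + 1) * (if b = p + 1 then 1 else 0) = b := by
  rcases b with _ | k
  · simp
  · simp only [Nat.add_right_cancel_iff, mul_ite, mul_one, mul_zero]
    rw [Finset.sum_ite_eq, if_pos (Finset.mem_range.mpr (by omega))]
    push_cast; ring

lemma eq_mul_of_secondDiff_eq_zero {m : ℕ} {y : ℕ → ℤ} (h0 : y 0 = 0)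
    (hΔ : ∀ p < m, y p + y (p + 2) - 2 * y (p + 1) = 0) :
    ∀ p ≤ m + 1, y p = p * y 1 := by
  suffices h : ∀ p ≤ m, y p = p * y 1 ∧ y (p + 1) = (p + 1) * y 1 by
    intro p hp
    rcases Nat.lt_or_ge p (m + 1) with hp' | hp'
    · exact (h p (by omega)).1
    · obtain rfl : p = m + 1 := by omega
      push_cast; exact (h m le_rfl).2
  intro p hp
  induction p with
  | zero => simp [h0]
  | succ p ih =>
    obtain ⟨ih₁, ih₂⟩ := ih (by omega)
    have := hΔ p (by omega)
    push_cast
    constructor <;> linarith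

theorem eq_zero_of_secondDiff_eq_single_sub_single {N a b : ℕ} (ha : a < N) (hb : b < N)
    {y : ℕ → ℤ} (h0 : y 0 = 0) (hN : y N = 0)
    (hΔ : ∀ p, p + 1 < N → y p + y (p + 2) - 2 * y (p + 1)
      = (if b = p + 1 then 1 else 0) - (if a = p + 1 then 1 else 0)) :
    ∀ p ≤ N, y p = 0 := by
  obtain ⟨m, rfl⟩ : ∃ m, N = m + 1 := ⟨N - 1, by omega⟩
  -- summing against the harmonic weight `p + 1` leaves only a boundary term
  have hsum : (m + 1 : ℤ) * -y m = b - a := by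
    have := sum_range_mul_secondDiff y m
    rw [Finset.sum_congr rfl fun p hp => by rw [hΔ p (by simp at hp; omega)], hN, h0] at this
    simp only [mul_sub, Finset.sum_sub_distrib, sum_range_mul_ite_eq (show b ≤ m by omega),
      sum_range_mul_ite_eq (show a ≤ m by omega)] at this
    linarith
  have hab : a = b := by
    have := Int.eq_zero_of_abs_lt_dvd ⟨_, hsum.symm⟩ (by rw [abs_lt]; omega)
    omega
  subst hab
  have hlin := eq_mul_of_secondDiff_eq_zero (m := m) h0 fun p hp => by simpa using hΔ p (by omega)
  have hy1 : y 1 = 0 := by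
    have := hlin (m + 1) le_rfl
    rw [hN] at this
    push_cast at this
    nlinarith
  intro p hp
  rw [hlin p hp, hy1, mul_zero]

section Multigraph

variable {W F : Type*} [Fintype F] [DecidableEq W] (tail head : F → W)

lemma edgesBetween_eq_filter_otherEnd {u : W} (hu : ∀ ε, tail ε = u → head ε ≠ u) (v : W) :
    edgesBetween tail head v u
      = (edgesAdj tail head u).filter fun ε => otherEnd tail head ε u = v := by
  ext ε
  have := hu ε
  simp only [edgesBetween, edgesAdj, Finset.mem_filter, Finset.mem_univ, true_and]
  unfold otherEnd
  grind

lemma sum_mul_fireDelta [Fintype W] (X : W → ℤ) {u : W} (hu : ∀ ε, tail ε = u → head ε ≠ u) :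
    ∑ v, X v * fireDelta tail head v u
      = ∑ ε ∈ edgesAdj tail head u, (X (otherEnd tail head ε u) - X u) := by
  have hfiber : ∀ v, X v * (edgesBetween tail head v u).card
      = ∑ ε ∈ edgesAdj tail head u with otherEnd tail head ε u = v, X (otherEnd tail head ε u) := by
    intro v
    rw [edgesBetween_eq_filter_otherEnd tail head hu, Finset.sum_congr rfl fun ε hε =>
      congrArg X (Finset.mem_filter.mp hε).2, Finset.sum_const, nsmul_eq_mul, mul_comm]
  simp only [fireDelta, mul_sub, Finset.sum_sub_distrib, mul_ite, mul_zero, hfiber,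
    Finset.sum_fiberwise, Finset.sum_ite_eq, Finset.mem_univ, if_true, Finset.sum_const,
    nsmul_eq_mul, mul_comm (X u)]

variable {ι : Type*} [DecidableEq ι] [Fintype ι]

def netFirings : List (ι × Bool) → ι → ℤ
  | [] => 0
  | q :: l => Pi.single q.1 (if q.2 then 1 else -1) + netFirings l

lemma foldl_chipFire_eq (g : ι → W) (l : List (ι × Bool)) (D : W → ℤ) :
    l.foldl (fun D x => if x.2 then chipFire tail head D (g x.1)
        else negChipFire tail head D (g x.1)) D
      = fun u => D u + ∑ i, netFirings l i * fireDelta tail head (g i) u := by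
  induction l generalizing D with
  | nil => simp [netFirings]
  | cons q l ih =>
    funext u
    rw [List.foldl_cons, ih]
    simp only [netFirings, Pi.add_apply, add_mul, Finset.sum_add_distrib, Pi.single_apply,
      ite_mul, zero_mul, Finset.sum_ite_eq', Finset.mem_univ, if_true]
    cases q.2 <;> simp only [Bool.false_eq_true, ↓reduceIte, chipFire, negChipFire, neg_mul,
      one_mul] <;> ring

end Multigraph

section Subdivision

variable {V E : Type*} (tail head : E → V) (n : E → ℕ)

lemma sigma_fin_mk_inj {κ : E → ℕ} {f e : E} {j : Fin (κ f)} {k : Fin (κ e)} :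
    (⟨f, j⟩ : Σ x : E, Fin (κ x)) = ⟨e, k⟩ ↔ f = e ∧ (j : ℕ) = k := by
  constructor
  · intro h
    obtain ⟨rfl, h⟩ := Sigma.mk.inj_iff.mp h
    exact ⟨rfl, congrArg Fin.val (eq_of_heq h)⟩
  · rintro ⟨rfl, h⟩
    exact congrArg _ (Fin.ext h)

lemma tailT_eq_inr {f e : E} {j : Fin (n f)} {i : Fin (n e - 1)} :
    tailT tail head n ⟨f, j⟩ = Sum.inr ⟨e, i⟩ ↔ f = e ∧ (j : ℕ) = i + 1 := by
  unfold tailT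
  dsimp only
  split_ifs with hj
  · simp only [false_iff, not_and]
    omega
  · rw [Sum.inr.injEq, sigma_fin_mk_inj (κ := fun x => n x - 1)]
    exact and_congr_right fun _ => by dsimp only; omega

lemma headT_eq_inr {f e : E} {j : Fin (n f)} {i : Fin (n e - 1)} :
    headT tail head n ⟨f, j⟩ = Sum.inr ⟨e, i⟩ ↔ f = e ∧ (j : ℕ) = i := by
  unfold headT
  dsimp only
  split_ifs with hj
  · simp only [false_iff, not_and]
    rintro rfl
    omega
  · rw [Sum.inr.injEq, sigma_fin_mk_inj (κ := fun x => n x - 1)]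

lemma headT_ne_of_tailT_eq_inr {ε : Σ e : E, Fin (n e)} {p : Σ e : E, Fin (n e - 1)}
    (h : tailT tail head n ε = Sum.inr p) : headT tail head n ε ≠ Sum.inr p := by
  obtain ⟨f, j⟩ := ε
  obtain ⟨e, i⟩ := p
  rw [tailT_eq_inr] at h
  rw [Ne, headT_eq_inr]
  omega

-- Position `p` on the chain over `e`: `0` is `tail e`, `n e` is `head e`, and `0 < p < n e` is
-- the new vertex `⟨e, p - 1⟩`; the old vertices get the value `0`.
def chainValues (x : (Σ e : E, Fin (n e - 1)) → ℤ) (e : E) (p : ℕ) : ℤ :=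
  if h : 0 < p ∧ p < n e then x ⟨e, ⟨p - 1, by omega⟩⟩ else 0

variable {n} (x : (Σ e : E, Fin (n e - 1)) → ℤ)

lemma chainValues_zero (e : E) : chainValues n x e 0 = 0 := dif_neg (by omega)

lemma chainValues_self (e : E) : chainValues n x e (n e) = 0 := dif_neg (by omega)

lemma chainValues_succ (e : E) (i : Fin (n e - 1)) : chainValues n x e (i + 1) = x ⟨e, i⟩ := by
  rw [chainValues, dif_pos (by omega)]
  rfl

lemma elim_zero_tailT (e : E) (j : Fin (n e)) :
    Sum.elim (0 : V → ℤ) x (tailT tail head n ⟨e, j⟩) = chainValues n x e j := by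
  unfold tailT chainValues
  dsimp only
  split_ifs <;> first | rfl | omega

lemma elim_zero_headT (e : E) (j : Fin (n e)) :
    Sum.elim (0 : V → ℤ) x (headT tail head n ⟨e, j⟩) = chainValues n x e (j + 1) := by
  unfold headT chainValues
  dsimp only
  split_ifs <;> first | rfl | omega

variable [Fintype E] [DecidableEq V] [DecidableEq E]

lemma edgesAdj_inr (e : E) (i : Fin (n e - 1)) :
    edgesAdj (tailT tail head n) (headT tail head n) (Sum.inr ⟨e, i⟩)
      = {⟨e, ⟨i, by omega⟩⟩, ⟨e, ⟨i + 1, by omega⟩⟩} := by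
  ext ⟨f, j⟩
  simp only [edgesAdj, Finset.mem_filter, Finset.mem_univ, true_and, tailT_eq_inr, headT_eq_inr,
    Finset.mem_insert, Finset.mem_singleton, sigma_fin_mk_inj]
  tauto

lemma sum_mul_fireDelta_inr [Fintype V] (e : E) (i : Fin (n e - 1)) :
    ∑ p, x p * fireDelta (tailT tail head n) (headT tail head n) (Sum.inr p) (Sum.inr ⟨e, i⟩)
      = chainValues n x e i + chainValues n x e (i + 2) - 2 * chainValues n x e (i + 1) := by
  have h := sum_mul_fireDelta (tailT tail head n) (headT tail head n) (Sum.elim (0 : V → ℤ) x)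
    fun _ => headT_ne_of_tailT_eq_inr tail head n (p := ⟨e, i⟩)
  simp only [Fintype.sum_sum_type, Sum.elim_inl, Pi.zero_apply, zero_mul, Finset.sum_const_zero,
    zero_add, Sum.elim_inr] at h
  rw [h, edgesAdj_inr, Finset.sum_pair (by simp)]
  simp only [otherEnd, tailT_eq_inr, true_and, if_true]
  rw [if_neg (by omega), elim_zero_tailT, elim_zero_headT, ← chainValues_succ x]
  ring

end Subdivision

theorem statement_6_general {V E : Type*} [Fintype V] [Fintype E] [DecidableEq V] [DecidableEq E]
    (tail head : E → V) (n : E → ℕ)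
    (w w' : AdmMD V E n)
    (l : List ((Σ e : E, Fin (n e - 1)) × Bool))
    (h : l.foldl (fun D x =>
        if x.2 then chipFire (tailT tail head n) (headT tail head n) D (Sum.inr x.1)
        else negChipFire (tailT tail head n) (headT tail head n) D (Sum.inr x.1))
      (inducedMD n w) = inducedMD n w') :
    inducedMD n w = inducedMD n w' := by
  rw [foldl_chipFire_eq] at h
  suffices hx : netFirings l = 0 by
    rw [← h]
    simp [hx]
  funext ⟨e, i⟩
  have : NeZero (n e) := ⟨by have := i.isLt; omega⟩
  have hΔ : ∀ p, p + 1 < n e → chainValues n (netFirings l) e p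
      + chainValues n (netFirings l) e (p + 2) - 2 * chainValues n (netFirings l) e (p + 1)
        = (if (w'.mu e).val = p + 1 then 1 else 0) - (if (w.mu e).val = p + 1 then 1 else 0) := by
    intro p hp
    have hu := congrFun h (Sum.inr ⟨e, ⟨p, by omega⟩⟩)
    rw [sum_mul_fireDelta_inr] at hu
    simp only [inducedMD] at hu
    linarith
  have := eq_zero_of_secondDiff_eq_single_sub_single (ZMod.val_lt (w.mu e))
    (ZMod.val_lt (w'.mu e)) (chainValues_zero _ e) (chainValues_self _ e) hΔ (i + 1) (by omega)
  rwa [chainValues_succ] at this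

/-- if one induced multidegree is obtained from another by a finite
sequence of chip-firing moves and inverse chip-firing moves performed only at new
vertices of the subdivision, then the two induced multidegrees are equal. -/
theorem statement_6 {V E : Type*} [Fintype V] [Fintype E] [DecidableEq V] [DecidableEq E]
    (tail head : E → V) (n : E → ℕ)
    (hloop : Loopless tail head) (hconn : MGConnected tail head)
    (hn : ∀ e, 0 < n e)
    (w w' : AdmMD V E n)
    (l : List ((Σ e : E, Fin (n e - 1)) × Bool))
    (h : l.foldl (fun D x =>
        if x.2 then chipFire (tailT tail head n) (headT tail head n) D (Sum.inr x.1)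
        else negChipFire (tailT tail head n) (headT tail head n) D (Sum.inr x.1))
      (inducedMD n w) = inducedMD n w') :
    inducedMD n w = inducedMD n w' :=
  statement_6_general tail head n w w' l h

end LLS
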